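/- arXiv:1204.2009 — 5 statements merged into one kernel-verified Lean document; each statement's English description precedes it below -/
import Mathlib

section
/- For all ζ > 0, the function g(ζ) = ζ·exp(-ζ²/2) / ∫₀^ζ exp(-t²/2) dt is strictly decreasing, i.e., g'(ζ) < 0 for all ζ > 0. -/
/-!
Write `D ζ = ∫₀^ζ exp(-t²/2) dt`, so `D' = exp(-ζ²/2)` and `(ζ exp(-ζ²/2))' = (1 - ζ²) exp(-ζ²/2)`.
The quotient rule gives `g' = -exp(-ζ²/2) · h / D²` with `h ζ = ζ exp(-ζ²/2) - (1 - ζ²) D ζ`.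
The exponential terms cancel in `h' = 2ζ D`, which is positive for `ζ > 0`; since `h 0 = 0`,
`h` is positive on `(0, ∞)`, hence `g' < 0` there.
-/

open Real Set

noncomputable def g (ζ : ℝ) : ℝ :=
  (ζ * Real.exp (-ζ^2/2)) / (∫ t in (0:ℝ)..ζ, Real.exp (-t^2/2))

noncomputable def gaussPrimitive (ζ : ℝ) : ℝ := ∫ t in (0:ℝ)..ζ, exp (-t^2/2)

lemma continuous_exp_neg_sq_div_two : Continuous fun t : ℝ => exp (-t^2/2) := by
  fun_prop

lemma hasDerivAt_gaussPrimitive (ζ : ℝ) : HasDerivAt gaussPrimitive (exp (-ζ^2/2)) ζ :=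
  (continuous_exp_neg_sq_div_two.integral_hasStrictDerivAt 0 ζ).hasDerivAt

lemma gaussPrimitive_pos {ζ : ℝ} (hζ : 0 < ζ) : 0 < gaussPrimitive ζ :=
  intervalIntegral.intervalIntegral_pos_of_pos
    (continuous_exp_neg_sq_div_two.intervalIntegrable 0 ζ) (fun _ => exp_pos _) hζ

lemma hasDerivAt_mul_exp_neg_sq_div_two (ζ : ℝ) :
    HasDerivAt (fun x : ℝ => x * exp (-x^2/2)) (exp (-ζ^2/2) * (1 - ζ^2)) ζ := by
  have hexponent : HasDerivAt (fun x : ℝ => -x^2/2) (-ζ) ζ :=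
    ((hasDerivAt_pow 2 ζ).neg.div_const 2).congr_deriv (by push_cast; ring)
  exact ((hasDerivAt_id ζ).mul hexponent.exp).congr_deriv (by simp only [id]; ring)

noncomputable def gDerivFactor (ζ : ℝ) : ℝ :=
  ζ * exp (-ζ^2/2) - (1 - ζ^2) * gaussPrimitive ζ

lemma hasDerivAt_gDerivFactor (ζ : ℝ) :
    HasDerivAt gDerivFactor (2 * ζ * gaussPrimitive ζ) ζ := by
  have hpoly : HasDerivAt (fun x : ℝ => 1 - x^2) (-(2 * ζ)) ζ :=
    ((hasDerivAt_pow 2 ζ).const_sub 1).congr_deriv (by push_cast; ring)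
  exact ((hasDerivAt_mul_exp_neg_sq_div_two ζ).sub
    (hpoly.mul (hasDerivAt_gaussPrimitive ζ))).congr_deriv (by ring)

lemma gDerivFactor_pos {ζ : ℝ} (hζ : 0 < ζ) : 0 < gDerivFactor ζ := by
  have hmono : StrictMonoOn gDerivFactor (Ici 0) := by
    refine strictMonoOn_of_deriv_pos (convex_Ici 0)
      (fun x _ => (hasDerivAt_gDerivFactor x).continuousAt.continuousWithinAt) ?_
    intro x hx
    rw [interior_Ici] at hx
    rw [(hasDerivAt_gDerivFactor x).deriv]
    exact mul_pos (mul_pos two_pos hx) (gaussPrimitive_pos hx)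
  have hzero : gDerivFactor 0 = 0 := by simp [gDerivFactor, gaussPrimitive]
  simpa [hzero] using hmono self_mem_Ici hζ.le hζ

lemma hasDerivAt_g {ζ : ℝ} (hζ : 0 < ζ) :
    HasDerivAt g (-(exp (-ζ^2/2) * gDerivFactor ζ) / gaussPrimitive ζ ^ 2) ζ :=
  ((hasDerivAt_mul_exp_neg_sq_div_two ζ).div (hasDerivAt_gaussPrimitive ζ)
    (gaussPrimitive_pos hζ).ne').congr_deriv (by unfold gDerivFactor; ring)

lemma deriv_g_neg {ζ : ℝ} (hζ : 0 < ζ) : deriv g ζ < 0 := by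
  rw [(hasDerivAt_g hζ).deriv]
  exact div_neg_of_neg_of_pos (neg_neg_of_pos (mul_pos (exp_pos _) (gDerivFactor_pos hζ)))
    (pow_pos (gaussPrimitive_pos hζ) 2)

theorem g_strictAnti :
    StrictAntiOn g (Set.Ioi (0:ℝ)) ∧ ∀ ζ : ℝ, 0 < ζ → deriv g ζ < 0 := by
  refine ⟨strictAntiOn_of_deriv_neg (convex_Ioi 0)
    (fun x hx => (hasDerivAt_g hx).continuousAt.continuousWithinAt) ?_,
    fun ζ hζ => deriv_g_neg hζ⟩
  intro x hx
  rw [interior_Ioi] at hx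
  exact deriv_g_neg hx
end

section
/- For all ζ > 0, (1 - ζ²)·∫₀^ζ exp(-t²/2) dt < ζ·exp(-ζ²/2). -/
open Real Set

/- The function `x ↦ x e^{-x²/2} - (1 - x²) ∫₀ˣ e^{-t²/2} dt` vanishes at `0` and has derivative
`2x ∫₀ˣ e^{-t²/2} dt`, which is positive for `x > 0`; so it is positive on `(0, ∞)`. -/

lemma hasDerivAt_exp_neg_sq_div_two (x : ℝ) :
    HasDerivAt (fun t : ℝ => exp (-t ^ 2 / 2)) (-x * exp (-x ^ 2 / 2)) x := by
  have hq : HasDerivAt (fun t : ℝ => -t ^ 2 / 2) (-x) x :=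
    ((hasDerivAt_pow 2 x).neg.div_const 2).congr_deriv (by ring)
  simpa [mul_comm] using hq.exp

lemma hasDerivAt_integral_exp_neg_sq_div_two (x : ℝ) :
    HasDerivAt (fun u : ℝ => ∫ t in (0:ℝ)..u, exp (-t ^ 2 / 2)) (exp (-x ^ 2 / 2)) x :=
  ((by fun_prop : Continuous fun t : ℝ => exp (-t ^ 2 / 2)).integral_hasStrictDerivAt 0 x).hasDerivAt

lemma integral_exp_neg_sq_div_two_pos {x : ℝ} (hx : 0 < x) :
    0 < ∫ t in (0:ℝ)..x, exp (-t ^ 2 / 2) :=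
  intervalIntegral.intervalIntegral_pos_of_pos_on
    ((by fun_prop : Continuous fun t : ℝ => exp (-t ^ 2 / 2)).intervalIntegrable 0 x)
    (fun _ _ => exp_pos _) hx

noncomputable def gaussianGap (x : ℝ) : ℝ :=
  x * exp (-x ^ 2 / 2) - (1 - x ^ 2) * ∫ t in (0:ℝ)..x, exp (-t ^ 2 / 2)

lemma gaussianGap_zero : gaussianGap 0 = 0 := by
  simp [gaussianGap]

lemma hasDerivAt_gaussianGap (x : ℝ) :
    HasDerivAt gaussianGap (2 * x * ∫ t in (0:ℝ)..x, exp (-t ^ 2 / 2)) x := by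
  have hpoly : HasDerivAt (fun y : ℝ => 1 - y ^ 2) (-(2 * x)) x := by
    simpa using (hasDerivAt_pow 2 x).const_sub 1
  have h := ((hasDerivAt_id x).mul (hasDerivAt_exp_neg_sq_div_two x)).sub
    (hpoly.mul (hasDerivAt_integral_exp_neg_sq_div_two x))
  exact h.congr_deriv (by simp only [id]; ring)

lemma strictMonoOn_gaussianGap : StrictMonoOn gaussianGap (Ici 0) := by
  refine strictMonoOn_of_deriv_pos (convex_Ici 0)
    (fun x _ => (hasDerivAt_gaussianGap x).continuousAt.continuousWithinAt) fun x hx => ?_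
  rw [interior_Ici] at hx
  rw [(hasDerivAt_gaussianGap x).deriv]
  exact mul_pos (by linarith [mem_Ioi.mp hx]) (integral_exp_neg_sq_div_two_pos hx)

theorem stmt2 (ζ : ℝ) (h0 : 0 < ζ) :
    (1 - ζ^2) * (∫ t in (0:ℝ)..ζ, Real.exp (-t^2/2)) < ζ * Real.exp (-ζ^2/2) := by
  have h : gaussianGap 0 < gaussianGap ζ :=
    strictMonoOn_gaussianGap self_mem_Ici (mem_Ici.mpr h0.le) h0
  rw [gaussianGap_zero, gaussianGap] at h
  linarith
end

section
/- Fix a > 0 and define f(ζ) = ln(∫₀^ζ exp(-t²/2) dt) + ln(∫₀^{a/ζ} exp(-t²/2) dt) for ζ > 0. Then f is strictly decreasing on the interval (√a, ∞). -/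
/-!
Write `f(ζ) = g(ζ) + g(a/ζ)` with `g = log G`, `G(x) = ∫₀ˣ exp(-t²/2) dt`. Then
`ζ f'(ζ) = h(ζ) - h(a/ζ)` where `h(x) = x g'(x) = x exp(-x²/2) / G(x)`, and for `ζ > √a` we have
`a/ζ < ζ`; so `f' < 0` as soon as `h` is strictly decreasing on `(0, ∞)`. The latter reduces to
`(1 - x²) G(x) < x exp(-x²/2)`, which is clear for `x ≥ 1` and follows from `G(x) ≤ x` and
`1 - x² < exp(-x²/2)` for `x < 1`.
-/

open Real Set

theorem strictAntiOn_add_comp_div {g g' : ℝ → ℝ} {a : ℝ} (ha : 0 < a)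
    (hg : ∀ x, 0 < x → HasDerivAt g (g' x) x)
    (hmono : StrictAntiOn (fun x => x * g' x) (Ioi 0)) :
    StrictAntiOn (fun ζ => g ζ + g (a / ζ)) (Ioi √a) := by
  have hderiv : ∀ ζ ∈ Ioi √a,
      HasDerivAt (fun ζ => g ζ + g (a / ζ)) (g' ζ + g' (a / ζ) * (-a / ζ ^ 2)) ζ := by
    intro ζ hζ
    have hζ0 : 0 < ζ := (sqrt_pos.mpr ha).trans hζ
    have hdiv : HasDerivAt (fun ζ => a / ζ) (-a / ζ ^ 2) ζ := by
      simpa [div_eq_mul_inv, neg_div] using (hasDerivAt_inv hζ0.ne').const_mul a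
    exact (hg ζ hζ0).add ((hg _ (div_pos ha hζ0)).comp ζ hdiv)
  refine strictAntiOn_of_deriv_neg (convex_Ioi _)
    (fun ζ hζ => (hderiv ζ hζ).continuousAt.continuousWithinAt) ?_
  rw [interior_Ioi]
  intro ζ hζ
  rw [(hderiv ζ hζ).deriv]
  have hζ0 : 0 < ζ := (sqrt_pos.mpr ha).trans hζ
  have hlt : a / ζ < ζ := by
    rw [div_lt_iff₀ hζ0, ← sq]
    exact (sqrt_lt' hζ0).mp hζ
  have hdecr := hmono (div_pos ha hζ0) hζ0 hlt
  have hrw : g' ζ + g' (a / ζ) * (-a / ζ ^ 2) = (ζ * g' ζ - a / ζ * g' (a / ζ)) / ζ := by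
    field_simp
    ring
  rw [hrw]
  exact div_neg_of_neg_of_pos (sub_neg.mpr hdecr) hζ0

noncomputable def gaussPartialIntegral (x : ℝ) : ℝ := ∫ t in (0 : ℝ)..x, exp (-t ^ 2 / 2)

namespace gaussPartialIntegral

theorem continuous_integrand : Continuous fun t : ℝ => exp (-t ^ 2 / 2) := by
  fun_prop

theorem hasDerivAt (x : ℝ) : HasDerivAt gaussPartialIntegral (exp (-x ^ 2 / 2)) x :=
  intervalIntegral.integral_hasDerivAt_right (continuous_integrand.intervalIntegrable _ _)
    (continuous_integrand.stronglyMeasurableAtFilter _ _) continuous_integrand.continuousAt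

theorem pos {x : ℝ} (hx : 0 < x) : 0 < gaussPartialIntegral x :=
  intervalIntegral.intervalIntegral_pos_of_pos_on (continuous_integrand.intervalIntegrable _ _)
    (fun _ _ => exp_pos _) hx

theorem le_self {x : ℝ} (hx : 0 ≤ x) : gaussPartialIntegral x ≤ x := by
  have h := intervalIntegral.integral_mono_on hx (continuous_integrand.intervalIntegrable _ _)
    (intervalIntegrable_const (μ := MeasureTheory.volume) (c := (1 : ℝ)))
    (fun t _ => exp_le_one_iff.mpr (by nlinarith [sq_nonneg t]))
  simpa [gaussPartialIntegral] using h

theorem one_sub_sq_mul_lt {x : ℝ} (hx : 0 < x) :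
    (1 - x ^ 2) * gaussPartialIntegral x < x * exp (-x ^ 2 / 2) := by
  have hG := pos hx
  have hE := exp_pos (-x ^ 2 / 2)
  rcases le_or_gt 1 x with h | h
  · have hneg : 1 - x ^ 2 ≤ 0 := by nlinarith
    nlinarith [mul_nonpos_of_nonpos_of_nonneg hneg hG.le, mul_pos hx hE]
  · have he : 1 - x ^ 2 < exp (-x ^ 2 / 2) := by
      nlinarith [add_one_lt_exp (x := -x ^ 2 / 2) (by nlinarith)]
    nlinarith [le_self hx.le]

theorem strictAntiOn_mul_logDeriv :
    StrictAntiOn (fun x => x * (exp (-x ^ 2 / 2) / gaussPartialIntegral x)) (Ioi 0) := by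
  have hderiv : ∀ x ∈ Ioi (0 : ℝ), HasDerivAt
      (fun x => x * (exp (-x ^ 2 / 2) / gaussPartialIntegral x))
      (((1 - x ^ 2) * gaussPartialIntegral x - x * exp (-x ^ 2 / 2)) * exp (-x ^ 2 / 2)
        / gaussPartialIntegral x ^ 2) x := by
    intro x hx
    have hexp : HasDerivAt (fun x : ℝ => exp (-x ^ 2 / 2)) (exp (-x ^ 2 / 2) * (-x)) x := by
      have h := ((hasDerivAt_pow 2 x).neg.div_const 2).congr_deriv (by ring : _ = -x)
      exact h.exp
    refine ((hasDerivAt_id' x).mul (hexp.div (hasDerivAt x) (pos hx).ne')).congr_deriv ?_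
    rw [Pi.div_apply]
    field_simp
    ring
  refine strictAntiOn_of_deriv_neg (convex_Ioi 0)
    (fun x hx => (hderiv x hx).continuousAt.continuousWithinAt) ?_
  rw [interior_Ioi]
  intro x hx
  rw [(hderiv x hx).deriv]
  have hneg := sub_neg.mpr (one_sub_sq_mul_lt hx)
  exact div_neg_of_neg_of_pos (mul_neg_of_neg_of_pos hneg (exp_pos _)) (pow_pos (pos hx) 2)

end gaussPartialIntegral

theorem stmt3 (a : ℝ) (ha : 0 < a) :
    StrictAntiOn
      (fun ζ : ℝ =>
        Real.log (∫ t in (0:ℝ)..ζ, Real.exp (-t^2/2)) +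
        Real.log (∫ t in (0:ℝ)..(a/ζ), Real.exp (-t^2/2)))
      (Set.Ioi (Real.sqrt a)) :=
  strictAntiOn_add_comp_div (g := fun x => log (gaussPartialIntegral x)) ha
    (fun x hx => (gaussPartialIntegral.hasDerivAt x).log (gaussPartialIntegral.pos hx).ne')
    gaussPartialIntegral.strictAntiOn_mul_logDeriv
end

section
/- Let r₁₁, r₁₂, r₂₂ be reals with r₁₁, r₂₂ > 0, δ·r₁₁² > r₁₂² + r₂₂² for some δ ∈ (1/4,1], and r₁₁/2 < |r₁₂| < r₁₁. Let r̃₁₂ = r₁₂ - sign(r₁₂)·r₁₁. Then √(r̃₁₂² + r₂₂²) < √(r₁₂² + r₂₂²), and r₁₁·r₂₂/√(r̃₁₂² + r₂₂²) ≤ √(r₁₂² + r₂₂²), with equality in the latter if and only if |r₁₁·r₁₂| = r₁₂² + r₂₂². -/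
/-!
Write `a = |r₁₂|`; size reduction turns the column `(r₁₂, r₂₂)` into one of squared length
`(a - r₁₁)² + r₂₂²`, which is shorter exactly because `r₁₁ < 2a`. The reduction is unimodular,
so the old and new columns span a parallelogram of the same area `r₁₁ r₂₂`; Lagrange's identity
then bounds that area by the product of their lengths, with equality iff the columns are
orthogonal, i.e. iff `a r₁₁ = r₁₂² + r₂₂²`.
-/

lemma Real.sub_sign_mul_sq {x : ℝ} (hx : x ≠ 0) (c : ℝ) :
    (x - Real.sign x * c) ^ 2 = (|x| - c) ^ 2 := by
  rcases hx.lt_or_gt with h | h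
  · rw [Real.sign_of_neg h, abs_of_neg h]; ring
  · rw [Real.sign_of_pos h, abs_of_pos h]; ring

/-- Lagrange's identity `‖u‖²‖v‖² = det(u, v)² + ⟪u, v⟫²` for `u = (a, b)`, `v = (a - c, b)`. -/
lemma sq_add_sq_mul_sub_sq_add_sq (a b c : ℝ) :
    (a ^ 2 + b ^ 2) * ((a - c) ^ 2 + b ^ 2) = (c * b) ^ 2 + (a ^ 2 + b ^ 2 - c * a) ^ 2 := by
  ring

lemma mul_div_sqrt_le_sqrt (a : ℝ) {b c : ℝ} (hb : 0 < b) :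
    c * b / √((a - c) ^ 2 + b ^ 2) ≤ √(a ^ 2 + b ^ 2) := by
  have hpos : 0 < (a - c) ^ 2 + b ^ 2 := by positivity
  rw [div_le_iff₀ (Real.sqrt_pos.2 hpos), ← Real.sqrt_mul' _ hpos.le]
  refine (le_abs_self _).trans (Real.abs_le_sqrt ?_)
  rw [sq_add_sq_mul_sub_sq_add_sq]
  exact le_add_of_nonneg_right (sq_nonneg _)

lemma mul_div_sqrt_eq_sqrt_iff (a : ℝ) {b c : ℝ} (hc : 0 ≤ c) (hb : 0 < b) :
    c * b / √((a - c) ^ 2 + b ^ 2) = √(a ^ 2 + b ^ 2) ↔ c * a = a ^ 2 + b ^ 2 := by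
  have hpos : 0 < (a - c) ^ 2 + b ^ 2 := by positivity
  rw [div_eq_iff (Real.sqrt_pos.2 hpos).ne', ← Real.sqrt_mul' _ hpos.le,
    sq_add_sq_mul_sub_sq_add_sq, eq_comm,
    Real.sqrt_eq_iff_mul_self_eq (by positivity) (by positivity), ← sq, add_eq_left,
    pow_eq_zero_iff two_ne_zero, sub_eq_zero, eq_comm]

theorem stmt8_general (r₁₁ r₁₂ r₂₂ : ℝ) (h₁₁ : 0 < r₁₁) (h₂₂ : 0 < r₂₂)
    (hlow : r₁₁ / 2 < |r₁₂|) :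
    Real.sqrt ((r₁₂ - Real.sign r₁₂ * r₁₁)^2 + r₂₂^2) < Real.sqrt (r₁₂^2 + r₂₂^2) ∧
    r₁₁ * r₂₂ / Real.sqrt ((r₁₂ - Real.sign r₁₂ * r₁₁)^2 + r₂₂^2) ≤
      Real.sqrt (r₁₂^2 + r₂₂^2) ∧
    (r₁₁ * r₂₂ / Real.sqrt ((r₁₂ - Real.sign r₁₂ * r₁₁)^2 + r₂₂^2) =
      Real.sqrt (r₁₂^2 + r₂₂^2) ↔ |r₁₁ * r₁₂| = r₁₂^2 + r₂₂^2) := by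
  have hr₁₂ : r₁₂ ≠ 0 := by
    rintro rfl
    rw [abs_zero] at hlow
    linarith
  rw [Real.sub_sign_mul_sq hr₁₂, ← sq_abs r₁₂, abs_mul, abs_of_pos h₁₁]
  exact ⟨Real.sqrt_lt_sqrt (by positivity) (by nlinarith),
    mul_div_sqrt_le_sqrt _ h₂₂, mul_div_sqrt_eq_sqrt_iff _ h₁₁.le h₂₂⟩

theorem stmt8 (r₁₁ r₁₂ r₂₂ δ : ℝ) (h₁₁ : 0 < r₁₁) (h₂₂ : 0 < r₂₂)
    (hδ₁ : 1/4 < δ) (hδ₂ : δ ≤ 1) (hlov : δ * r₁₁^2 > r₁₂^2 + r₂₂^2)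
    (hlow : r₁₁ / 2 < |r₁₂|) (hup : |r₁₂| < r₁₁) :
    Real.sqrt ((r₁₂ - Real.sign r₁₂ * r₁₁)^2 + r₂₂^2) < Real.sqrt (r₁₂^2 + r₂₂^2) ∧
    r₁₁ * r₂₂ / Real.sqrt ((r₁₂ - Real.sign r₁₂ * r₁₁)^2 + r₂₂^2) ≤
      Real.sqrt (r₁₂^2 + r₂₂^2) ∧
    (r₁₁ * r₂₂ / Real.sqrt ((r₁₂ - Real.sign r₁₂ * r₁₁)^2 + r₂₂^2) =
      Real.sqrt (r₁₂^2 + r₂₂^2) ↔ |r₁₁ * r₁₂| = r₁₂^2 + r₂₂^2) :=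
  stmt8_general r₁₁ r₁₂ r₂₂ h₁₁ h₂₂ hlow
end

section
/- Let R be an n×n upper triangular real matrix with positive diagonal entries r₁₁,…,rₙₙ, let β > 0, and let V_k > 0 for k = 1,…,n. Suppose for some index k ∈ {2,…,n}, new values s_{k-1,k-1}, s_{kk} > 0 satisfy s_{k-1,k-1}·s_{kk} = r_{k-1,k-1}·r_{kk} and s_{kk} > r_{kk}. Define ζ̂(R) = ∑ᵢ₌₁ⁿ V_{n-i+1}·β^{n-i+1}/(rᵢᵢ·r_{i+1,i+1}⋯rₙₙ), and ζ̂(R̄) the same expression with r_{k-1,k-1}, r_{kk} replaced by s_{k-1,k-1}, s_{kk}. Then ζ̂(R) > ζ̂(R̄). -/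
noncomputable def zetaHat (n : ℕ) (V : ℕ → ℝ) (β : ℝ) (d : Fin n → ℝ) : ℝ :=
  ∑ i : Fin n, V (n - i) * β ^ (n - (i:ℕ)) / ∏ j ∈ Finset.Ici i, d j

/-! An LLL column swap at `k` replaces the diagonal entries `d (k-1), d k` by `d' (k-1), d' k`
with the same product. Every tail product `∏_{j ≥ i} d j` then either contains both swapped
entries or neither, so it is unchanged, except the one starting at `k`, which grows with `d k`.
Since `ζ̂` is a positive combination of reciprocals of the tail products, it strictly decreases. -/

namespace Finset

theorem prod_eq_prod_of_mul_eq_mul {ι M : Type*} [CommMonoid M] [DecidableEq ι]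
    {s : Finset ι} {f g : ι → M} {a b : ι} (hab : a ≠ b) (ha : a ∈ s) (hb : b ∈ s)
    (hfg : ∀ i ∈ s, i ≠ a → i ≠ b → g i = f i) (hprod : g a * g b = f a * f b) :
    ∏ i ∈ s, g i = ∏ i ∈ s, f i := by
  have hsub : {a, b} ⊆ s := insert_subset ha (singleton_subset_iff.2 hb)
  rw [← prod_sdiff hsub, ← prod_sdiff (f := f) hsub, prod_pair hab, prod_pair hab, hprod]
  congr 1
  refine prod_congr rfl fun i hi => ?_
  simp only [mem_sdiff, mem_insert, mem_singleton, not_or] at hi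
  exact hfg i hi.1 hi.2.1 hi.2.2

section TailProduct

variable {ι : Type*} [LinearOrder ι] [LocallyFiniteOrderTop ι] {a b : ι}

theorem prod_Ici_eq_prod_Ici_of_covBy {M : Type*} [CommMonoid M] {f g : ι → M} (hab : a ⋖ b)
    (hfg : ∀ i, i ≠ a → i ≠ b → g i = f i) (hprod : g a * g b = f a * f b)
    {i : ι} (hi : i ≠ b) : ∏ j ∈ Ici i, g j = ∏ j ∈ Ici i, f j := by
  classical
  rcases hi.lt_or_gt with hib | hbi
  · exact prod_eq_prod_of_mul_eq_mul hab.lt.ne (mem_Ici.2 (hab.le_of_lt hib))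
      (mem_Ici.2 hib.le) (fun j _ => hfg j) hprod
  · refine prod_congr rfl fun j hj => hfg j ?_ ?_
    · exact (hab.lt.trans (hbi.trans_le (mem_Ici.1 hj))).ne'
    · exact (hbi.trans_le (mem_Ici.1 hj)).ne'

theorem prod_Ici_lt_prod_Ici_of_lt {R : Type*} [CommSemiring R] [PartialOrder R]
    [IsStrictOrderedRing R] {f g : ι → R} (hf : ∀ i, 0 < f i) (hab : a < b)
    (hfg : ∀ i, i ≠ a → i ≠ b → g i = f i) (hb : f b < g b) :
    ∏ j ∈ Ici b, f j < ∏ j ∈ Ici b, g j := by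
  refine prod_lt_prod (fun j _ => hf j) (fun j hj => ?_) ⟨b, mem_Ici.2 le_rfl, hb⟩
  rcases (mem_Ici.1 hj).eq_or_lt with rfl | hbj
  · exact hb.le
  · exact (hfg j (hab.trans hbj).ne' hbj.ne').ge

end TailProduct

end Finset

theorem zetaHat_lt_zetaHat {n : ℕ} {V : ℕ → ℝ} {β : ℝ} {d d' : Fin n → ℝ}
    (hV : ∀ m, 0 < V m) (hβ : 0 < β) (hd : ∀ i, 0 < d i)
    (hle : ∀ i, ∏ j ∈ Finset.Ici i, d j ≤ ∏ j ∈ Finset.Ici i, d' j)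
    (hlt : ∃ i, ∏ j ∈ Finset.Ici i, d j < ∏ j ∈ Finset.Ici i, d' j) :
    zetaHat n V β d' < zetaHat n V β d := by
  have hnum : ∀ i : Fin n, 0 < V (n - i) * β ^ (n - (i:ℕ)) := fun i =>
    mul_pos (hV _) (pow_pos hβ _)
  have hden : ∀ i : Fin n, 0 < ∏ j ∈ Finset.Ici i, d j := fun i =>
    Finset.prod_pos fun j _ => hd j
  obtain ⟨b, hb⟩ := hlt
  exact Finset.sum_lt_sum (fun i _ => div_le_div_of_nonneg_left (hnum i).le (hden i) (hle i))
    ⟨b, Finset.mem_univ b, div_lt_div_of_pos_left (hnum b) (hden b) hb⟩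

theorem stmt15 (n : ℕ) (V : ℕ → ℝ) (hV : ∀ m, 0 < V m) (β : ℝ) (hβ : 0 < β)
    (d d' : Fin n → ℝ) (hd : ∀ i, 0 < d i)
    (k : ℕ) (hk1 : 1 ≤ k) (hkn : k < n)
    (heq : ∀ i : Fin n, (i:ℕ) ≠ k - 1 → (i:ℕ) ≠ k → d' i = d i)
    (hprod : d' ⟨k-1, by omega⟩ * d' ⟨k, hkn⟩ = d ⟨k-1, by omega⟩ * d ⟨k, hkn⟩)
    (hinc : d ⟨k, hkn⟩ < d' ⟨k, hkn⟩) :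
    zetaHat n V β d' < zetaHat n V β d := by
  set a : Fin n := ⟨k - 1, by omega⟩
  set b : Fin n := ⟨k, hkn⟩
  have hab : a ⋖ b := Fin.covBy_iff.2 (Nat.covBy_iff_add_one_eq.2 (by simp only [a, b]; omega))
  have hfg : ∀ i, i ≠ a → i ≠ b → d' i = d i := fun i hia hib =>
    heq i (fun h => hia (Fin.ext h)) (fun h => hib (Fin.ext h))
  have htail_b := Finset.prod_Ici_lt_prod_Ici_of_lt hd hab.lt hfg hinc
  refine zetaHat_lt_zetaHat hV hβ hd (fun i => ?_) ⟨b, htail_b⟩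
  rcases eq_or_ne i b with rfl | hib
  · exact htail_b.le
  · exact (Finset.prod_Ici_eq_prod_Ici_of_covBy hab hfg hprod hib).ge
end
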